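/- arXiv:1902.09614 — 3 statements merged into one kernel-verified Lean document; each statement's English description precedes it below -/
import Mathlib

section
/- Let Y = (Y_t)_{t≥1} and μ = (μ_t)_{t≥1} have the βARC conditional structure with precision ν > 0. Then the (0,1)×(0,1)-valued process ((Y_t, μ_t))_{t≥1} is strictly stationary if and only if the process (μ_t)_{t≥1} is strictly stationary. -/
open MeasureTheory Set

/-- The density of the Beta(νz, ν(1-z)) distribution on (0,1), as in the paper. -/
noncomputable def betaDen (ν z y : ℝ) : ℝ :=
  Set.indicator (Set.Ioo 0 1)
    (fun y => Real.Gamma ν / (Real.Gamma (ν * z) * Real.Gamma (ν * (1 - z))) *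
      y ^ (ν * z - 1) * (1 - y) ^ (ν * (1 - z) - 1)) y

/-- The Beta(νz, ν(1-z)) probability distribution on (0,1) (as a measure on ℝ). -/
noncomputable def betaMeas (ν z : ℝ) : Measure ℝ :=
  volume.withDensity (fun y => ENNReal.ofReal (betaDen ν z y))

/-- Processes `Y` and `μ` taking values in `(0,1)` have the βARC conditional structure with
precision `ν`: for all distinct times and Borel sets `A j, B j ⊆ (0,1)`,
`P(∀j, Y (t j) ∈ A j, μ (t j) ∈ B j) = E[∏ j, 1_{B j}(μ (t j)) · Beta(ν μ, ν(1-μ))(A j)]`,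
i.e. conditionally on `μ` the `Y`'s are independent with `Y t ∼ Beta(ν μ t, ν(1-μ t))`. -/
def IsBetaARC {Ω : Type*} [MeasurableSpace Ω] (P : Measure Ω) (ν : ℝ)
    (Y μ : ℕ → Ω → ℝ) : Prop :=
  (∀ t, Measurable (Y t)) ∧ (∀ t, Measurable (μ t)) ∧
  (∀ t, ∀ᵐ ω ∂P, Y t ω ∈ Set.Ioo (0 : ℝ) 1) ∧
  (∀ t, ∀ᵐ ω ∂P, μ t ω ∈ Set.Ioo (0 : ℝ) 1) ∧
  ∀ (k : ℕ) (t : Fin k → ℕ), Function.Injective t →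
    ∀ A B : Fin k → Set ℝ, (∀ j, MeasurableSet (A j)) → (∀ j, MeasurableSet (B j)) →
      (∀ j, A j ⊆ Set.Ioo 0 1) → (∀ j, B j ⊆ Set.Ioo 0 1) →
      P {ω | ∀ j, Y (t j) ω ∈ A j ∧ μ (t j) ω ∈ B j} =
        ∫⁻ ω, ∏ j, ((B j).indicator 1 (μ (t j) ω) * betaMeas ν (μ (t j) ω) (A j)) ∂P

/-- Strict stationarity of a process: all finite-dimensional joint laws are shift invariant. -/
def StrictlyStationary {Ω E : Type*} [MeasurableSpace Ω] [MeasurableSpace E]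
    (P : Measure Ω) (Z : ℕ → Ω → E) : Prop :=
  ∀ (k : ℕ) (t : Fin k → ℕ) (h : ℕ),
    Measure.map (fun ω => fun j => Z (t j + h) ω) P =
      Measure.map (fun ω => fun j => Z (t j) ω) P

lemma measurable_realGamma : Measurable Real.Gamma := by
  have hS : MeasurableSet (Set.range (fun n : ℕ => -(n : ℝ))) :=
    (Set.countable_range _).measurableSet
  apply measurable_of_restrict_of_restrict_compl hS
  · have : Countable (Set.range (fun n : ℕ => -(n : ℝ))) := (Set.countable_range _).to_subtype
    exact measurable_of_countable _
  · apply Continuous.measurable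
    rw [← continuousOn_iff_continuous_restrict]
    intro x hx
    refine (Real.differentiableAt_Gamma ?_).continuousAt.continuousWithinAt
    intro m hm
    exact hx ⟨m, hm.symm⟩

lemma measurable_betaDen (ν : ℝ) : Measurable (fun p : ℝ × ℝ => betaDen ν p.1 p.2) := by
  have he : Measurable (fun p : ℝ × ℝ =>
      Real.Gamma ν / (Real.Gamma (ν * p.1) * Real.Gamma (ν * (1 - p.1))) *
        p.2 ^ (ν * p.1 - 1) * (1 - p.2) ^ (ν * (1 - p.1) - 1)) := by
    apply Measurable.mul
    apply Measurable.mul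
    · exact (measurable_const.div ((measurable_realGamma.comp (measurable_fst.const_mul ν)).mul
        (measurable_realGamma.comp ((measurable_const.sub measurable_fst).const_mul ν))))
    · exact measurable_snd.pow ((measurable_fst.const_mul ν).sub measurable_const)
    · exact (measurable_const.sub measurable_snd).pow
        (((measurable_const.sub measurable_fst).const_mul ν).sub measurable_const)
  have : (fun p : ℝ × ℝ => betaDen ν p.1 p.2) =
      Set.indicator (Prod.snd ⁻¹' Set.Ioo 0 1) (fun p : ℝ × ℝ =>
        Real.Gamma ν / (Real.Gamma (ν * p.1) * Real.Gamma (ν * (1 - p.1))) *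
          p.2 ^ (ν * p.1 - 1) * (1 - p.2) ^ (ν * (1 - p.1) - 1)) := by
    funext p
    simp only [betaDen, Set.indicator_apply, Set.mem_preimage]
    by_cases h : p.2 ∈ Set.Ioo (0:ℝ) 1 <;> simp [h]
  rw [this]
  exact he.indicator (measurableSet_Ioo.preimage measurable_snd)

lemma measurable_betaMeas (ν : ℝ) {A : Set ℝ} (hA : MeasurableSet A) :
    Measurable (fun z => betaMeas ν z A) := by
  have : (fun z => betaMeas ν z A) =
      fun z => ∫⁻ y, ENNReal.ofReal (betaDen ν z y) ∂(volume.restrict A) := by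
    funext z
    rw [betaMeas, withDensity_apply _ hA]
  rw [this]
  exact Measurable.lintegral_prod_right' (f := fun p : ℝ × ℝ => ENNReal.ofReal (betaDen ν p.1 p.2))
    ((measurable_betaDen ν).ennreal_ofReal)

section scratch
variable {Ω E : Type*} [MeasurableSpace Ω] [MeasurableSpace E]

/-- reduction: stationarity-type map equality for injective time vectors implies it for all. -/
lemma stationary_of_injective (P : Measure Ω) (Z : ℕ → Ω → E) (hZ : ∀ t, Measurable (Z t))
    (H : ∀ (k : ℕ) (s : Fin k → ℕ), Function.Injective s → ∀ h : ℕ,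
      Measure.map (fun ω => fun i => Z (s i + h) ω) P =
        Measure.map (fun ω => fun i => Z (s i) ω) P) :
    ∀ (k : ℕ) (t : Fin k → ℕ) (h : ℕ),
      Measure.map (fun ω => fun j => Z (t j + h) ω) P =
        Measure.map (fun ω => fun j => Z (t j) ω) P := by
  intro k t h
  classical
  set T : Finset ℕ := Finset.image t Finset.univ with hT
  set e := T.equivFin with he
  set s : Fin T.card → ℕ := fun i => ((e.symm i : T) : ℕ) with hs
  have hsinj : Function.Injective s := fun i i' hii' =>
    e.symm.injective (Subtype.ext hii')
  set r : Fin k → Fin T.card := fun j => e ⟨t j, Finset.mem_image_of_mem t (Finset.mem_univ j)⟩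
    with hr
  have hts : ∀ j, t j = s (r j) := by
    intro j; simp [hs, hr]
  have comp1 : ∀ u : ℕ, (fun ω => fun j => Z (t j + u) ω) =
      (fun v : Fin T.card → E => fun j => v (r j)) ∘ (fun ω => fun i => Z (s i + u) ω) := by
    intro u; funext ω; funext j; simp [hts j]
  have hmeas_outer : Measurable (fun v : Fin T.card → E => fun j => v (r j)) :=
    measurable_pi_lambda _ fun j => measurable_pi_apply (r j)
  have hmeas_inner : ∀ u, Measurable (fun ω => fun i => Z (s i + u) ω) :=
    fun u => measurable_pi_lambda _ fun i => hZ _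
  have e1 : Measure.map (fun ω => fun j => Z (t j + h) ω) P =
      Measure.map (fun v : Fin T.card → E => fun j => v (r j))
        (Measure.map (fun ω => fun i => Z (s i + h) ω) P) := by
    rw [Measure.map_map hmeas_outer (hmeas_inner h), ← comp1 h]
  have e2 : Measure.map (fun ω => fun j => Z (t j) ω) P =
      Measure.map (fun v : Fin T.card → E => fun j => v (r j))
        (Measure.map (fun ω => fun i => Z (s i) ω) P) := by
    rw [Measure.map_map hmeas_outer (by simpa using hmeas_inner 0)]
    have := comp1 0
    simp only [Nat.add_zero] at this
    rw [← this]
  rw [e1, e2, H T.card s hsinj h]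
end scratch

/-- key: the rectangle probability is a function of the law of the μ-vector. -/
lemma rect_eq {Ω : Type*} [MeasurableSpace Ω] (P : Measure Ω) [IsProbabilityMeasure P]
    (ν : ℝ) (Y μ : ℕ → Ω → ℝ) (hARC : IsBetaARC P ν Y μ)
    (k : ℕ) (u : Fin k → ℕ) (hu : Function.Injective u)
    (A B : Fin k → Set ℝ) (hA : ∀ j, MeasurableSet (A j)) (hB : ∀ j, MeasurableSet (B j)) :
    P {ω | ∀ j, Y (u j) ω ∈ A j ∧ μ (u j) ω ∈ B j} =
      ∫⁻ v : Fin k → ℝ, ∏ j, ((B j ∩ Set.Ioo 0 1).indicator 1 (v j) *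
          betaMeas ν (v j) (A j ∩ Set.Ioo 0 1))
        ∂(Measure.map (fun ω => fun j => μ (u j) ω) P) := by
  obtain ⟨hY, hμ, haeY, haeμ, harc⟩ := hARC
  -- step 1: replace A, B by intersections with Ioo 0 1 (a.e. equal events)
  have step1 : P {ω | ∀ j, Y (u j) ω ∈ A j ∧ μ (u j) ω ∈ B j} =
      P {ω | ∀ j, Y (u j) ω ∈ A j ∩ Set.Ioo 0 1 ∧ μ (u j) ω ∈ B j ∩ Set.Ioo 0 1} := by
    apply measure_congr
    rw [Filter.eventuallyEq_set]
    have h1 : ∀ᵐ ω ∂P, ∀ j : Fin k, Y (u j) ω ∈ Set.Ioo (0:ℝ) 1 :=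
      (MeasureTheory.ae_all_iff).2 fun j => haeY (u j)
    have h2 : ∀ᵐ ω ∂P, ∀ j : Fin k, μ (u j) ω ∈ Set.Ioo (0:ℝ) 1 :=
      (MeasureTheory.ae_all_iff).2 fun j => haeμ (u j)
    filter_upwards [h1, h2] with ω hY1 hμ1
    simp only [Set.mem_setOf_eq, Set.mem_inter_iff]
    constructor
    · intro hh j; exact ⟨⟨(hh j).1, hY1 j⟩, (hh j).2, hμ1 j⟩
    · intro hh j; exact ⟨(hh j).1.1, (hh j).2.1⟩
  rw [step1,
    harc k u hu (fun j => A j ∩ Set.Ioo 0 1) (fun j => B j ∩ Set.Ioo 0 1)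
      (fun j => (hA j).inter measurableSet_Ioo) (fun j => (hB j).inter measurableSet_Ioo)
      (fun j => Set.inter_subset_right) (fun j => Set.inter_subset_right)]
  rw [lintegral_map ?_ (measurable_pi_lambda _ fun j => hμ (u j))]
  apply Finset.measurable_prod
  intro j _
  exact ((measurable_one.indicator ((hB j).inter measurableSet_Ioo)).mul
    (measurable_betaMeas ν ((hA j).inter measurableSet_Ioo))).comp (measurable_pi_apply j)

/-- **Theorem 2.** If `(Y, μ)` has the βARC conditional structure with
precision `ν > 0`, then the pair process `(Y t, μ t)` is strictly stationary if and only if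
`μ` is strictly stationary. -/
theorem stmt3 {Ω : Type*} [MeasurableSpace Ω] (P : Measure Ω) [IsProbabilityMeasure P]
    (ν : ℝ) (hν : 0 < ν) (Y μ : ℕ → Ω → ℝ) (hARC : IsBetaARC P ν Y μ) :
    StrictlyStationary P (fun t ω => (Y t ω, μ t ω)) ↔ StrictlyStationary P μ := by
  have hY := hARC.1
  have hμ := hARC.2.1
  have hpair : ∀ (k : ℕ) (w : Fin k → ℕ),
      Measurable (fun ω => fun j => (Y (w j) ω, μ (w j) ω)) :=
    fun k w => measurable_pi_lambda _ fun j => (hY (w j)).prodMk (hμ (w j))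
  constructor
  · intro hstat k t h
    have comp : ∀ w : Fin k → ℕ, (fun ω => fun j => μ (w j) ω) =
        (fun v : Fin k → ℝ × ℝ => fun j => (v j).2) ∘
          (fun ω => fun j => (Y (w j) ω, μ (w j) ω)) := by
      intro w; funext ω; funext j; rfl
    have houter : Measurable (fun v : Fin k → ℝ × ℝ => fun j => (v j).2) :=
      measurable_pi_lambda _ fun j => measurable_snd.comp (measurable_pi_apply j)
    rw [comp, comp, ← Measure.map_map houter (hpair k _),
      ← Measure.map_map houter (hpair k _), hstat k t h]
  · intro hμstat
    apply stationary_of_injective P _ (fun t => (hY t).prodMk (hμ t))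
    intro k s hs h
    have hsh : Function.Injective (fun j => s j + h) := fun a b hab =>
      hs (Nat.add_right_cancel hab)
    haveI h1 : IsProbabilityMeasure
        (Measure.map (fun ω => fun j => (Y (s j + h) ω, μ (s j + h) ω)) P) :=
      Measure.isProbabilityMeasure_map (hpair k _).aemeasurable
    haveI h2 : IsProbabilityMeasure
        (Measure.map (fun ω => fun j => (Y (s j) ω, μ (s j) ω)) P) :=
      Measure.isProbabilityMeasure_map (hpair k _).aemeasurable
    set C : Set (Set (Fin k → ℝ × ℝ)) := Set.pi Set.univ ''
      Set.pi Set.univ (fun _ : Fin k =>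
        Set.image2 (· ×ˢ ·) {A : Set ℝ | MeasurableSet A} {B : Set ℝ | MeasurableSet B})
      with hC
    have hspan : IsCountablySpanning
        (Set.image2 (· ×ˢ ·) {A : Set ℝ | MeasurableSet A} {B : Set ℝ | MeasurableSet B}) := by
      refine ⟨fun _ => Set.univ, fun n =>
        ⟨Set.univ, by simp, Set.univ, by simp, Set.univ_prod_univ⟩, Set.iUnion_const _⟩
    have hgen : (by infer_instance : MeasurableSpace (Fin k → ℝ × ℝ)) = .generateFrom C :=
      (generateFrom_eq_pi (fun _ => generateFrom_prod) (fun _ => hspan)).symm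
    have hpi : IsPiSystem C := IsPiSystem.pi (fun _ => isPiSystem_prod)
    refine MeasureTheory.ext_of_generate_finite C hgen hpi ?_ (by simp)
    rintro _ ⟨S, hS, rfl⟩
    choose A hAmem B hBmem hprod using fun j => hS j (Set.mem_univ j)
    have hSmeas : MeasurableSet (Set.pi Set.univ S) :=
      MeasurableSet.univ_pi fun j => by
        rw [← hprod j]; exact (show MeasurableSet (A j) from hAmem j).prod (show MeasurableSet (B j) from hBmem j)
    have hpre : ∀ w : Fin k → ℕ,
        (fun ω => fun j => (Y (w j) ω, μ (w j) ω)) ⁻¹' (Set.pi Set.univ S) =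
          {ω | ∀ j, Y (w j) ω ∈ A j ∧ μ (w j) ω ∈ B j} := by
      intro w; ext ω
      simp only [Set.mem_preimage, Set.mem_pi, Set.mem_univ, forall_true_left, Set.mem_setOf_eq]
      refine forall_congr' fun j => ?_
      rw [← hprod j, Set.mem_prod]
    rw [Measure.map_apply (hpair k _) hSmeas, Measure.map_apply (hpair k _) hSmeas,
      hpre, hpre,
      rect_eq P ν Y μ hARC k (fun j => s j + h) hsh A B hAmem hBmem,
      rect_eq P ν Y μ hARC k s hs A B hAmem hBmem,
      hμstat k s h]
end

section
/- Let T : [0,1] → [0,1] be Borel measurable with a T-invariant probability measure λ_T that is absolutely continuous with respect to Lebesgue measure and satisfies λ_T((0,1)) = 1. Let U₀ be a random variable with law λ_T and set μ_t := T^{t−1}(U₀) for t ≥ 1, where T^{t−1} is the (t−1)-fold composition of T. Let ν > 0 and let Y = (Y_t)_{t≥1} have the βARC conditional structure with μ = (μ_t)_{t≥1} and precision ν. Then (Y_t)_{t≥1} is strictly stationary, and for each t ≥ 1 the law of Y_t is absolutely continuous with respect to Lebesgue measure with density f(y) = ∫₀¹ Γ(ν)/(Γ(νz)·Γ(ν(1−z)))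 · y^{νz−1}·(1−y)^{ν(1−z)−1} dλ_T(z) for y ∈ (0,1). -/
open MeasureTheory Set

lemma measurable_betaMeas_apply (ν : ℝ) {S : Set ℝ} (hS : MeasurableSet S) :
    Measurable (fun z => betaMeas ν z S) := by
  have heq : (fun z => betaMeas ν z S) = fun z =>
      ∫⁻ y, S.indicator (fun y => ENNReal.ofReal (betaDen ν z y)) y := by
    funext z
    rw [betaMeas, withDensity_apply _ hS, lintegral_indicator hS]
  rw [heq]
  apply Measurable.lintegral_prod_right (f := fun z y =>
    S.indicator (fun y => ENNReal.ofReal (betaDen ν z y)) y)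
  have h2 : (Function.uncurry fun z y =>
      S.indicator (fun y => ENNReal.ofReal (betaDen ν z y)) y) =
      ({p : ℝ × ℝ | p.2 ∈ S}).indicator
        (fun p : ℝ × ℝ => ENNReal.ofReal (betaDen ν p.1 p.2)) := by
    ext p
    by_cases hy : p.2 ∈ S
    · rw [Function.uncurry]; simp only [Set.indicator_of_mem hy,
        Set.indicator_of_mem (show p ∈ {p : ℝ × ℝ | p.2 ∈ S} from hy)]
    · rw [Function.uncurry]; simp only [Set.indicator_of_notMem hy,
        Set.indicator_of_notMem (show p ∉ {p : ℝ × ℝ | p.2 ∈ S} from hy)]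
  rw [h2]
  exact Measurable.indicator
    ((ENNReal.measurable_ofReal).comp (measurable_betaDen ν)) (measurable_snd hS)

lemma betaMeas_inter (ν z : ℝ) {A : Set ℝ} (hA : MeasurableSet A) :
    betaMeas ν z A = betaMeas ν z (A ∩ Set.Ioo 0 1) := by
  have hkey : ∀ y, ENNReal.ofReal (betaDen ν z y) =
      (Set.Ioo (0:ℝ) 1).indicator (fun y => ENNReal.ofReal (betaDen ν z y)) y := by
    intro y
    by_cases hy : y ∈ Set.Ioo (0:ℝ) 1
    · rw [Set.indicator_of_mem hy]
    · rw [Set.indicator_of_notMem hy, betaDen, Set.indicator_of_notMem hy,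
        ENNReal.ofReal_zero]
  rw [betaMeas, withDensity_apply _ hA,
    withDensity_apply _ (hA.inter measurableSet_Ioo)]
  calc ∫⁻ y in A, ENNReal.ofReal (betaDen ν z y)
      = ∫⁻ y in A, (Set.Ioo (0:ℝ) 1).indicator
          (fun y => ENNReal.ofReal (betaDen ν z y)) y :=
        lintegral_congr fun y => hkey y
    _ = ∫⁻ y in Set.Ioo (0:ℝ) 1 ∩ A, ENNReal.ofReal (betaDen ν z y) :=
        setLIntegral_indicator measurableSet_Ioo _
    _ = ∫⁻ y in A ∩ Set.Ioo (0:ℝ) 1, ENNReal.ofReal (betaDen ν z y) := by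
        rw [Set.inter_comm]

lemma map_iterate_eq {T : ℝ → ℝ} (hT : Measurable T) {lam : Measure ℝ}
    (hinv : ∀ A : Set ℝ, MeasurableSet A → lam (T ⁻¹' A) = lam A) (n : ℕ) :
    Measure.map (T^[n]) lam = lam := by
  induction n with
  | zero => simp [Measure.map_id]
  | succ n ih =>
    have h1 : Measure.map T lam = lam :=
      Measure.ext fun A hA => by rw [Measure.map_apply hT hA, hinv A hA]
    have : (T^[n+1]) = T^[n] ∘ T := Function.iterate_succ' T n ▸ Function.iterate_succ T n
    rw [this, ← Measure.map_map (hT.iterate n) hT, h1, ih]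

lemma rect_formula {Ω : Type*} [MeasurableSpace Ω] (P : Measure Ω) [IsProbabilityMeasure P]
    (T : ℝ → ℝ) (hT : Measurable T) (lam : Measure ℝ)
    (U₀ : Ω → ℝ) (hU₀ : Measurable U₀) (hlaw : Measure.map U₀ P = lam)
    (ν : ℝ) (Y : ℕ → Ω → ℝ) (hARC : IsBetaARC P ν Y (fun t ω => T^[t] (U₀ ω)))
    (k : ℕ) (t : Fin k → ℕ) (ht : Function.Injective t)
    (A : Fin k → Set ℝ) (hA : ∀ j, MeasurableSet (A j)) :
    P {ω | ∀ j, Y (t j) ω ∈ A j} =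
      ∫⁻ z, ∏ j, betaMeas ν (T^[t j] z) (A j ∩ Set.Ioo 0 1) ∂lam := by
  obtain ⟨hYm, hμm, hYae, hμae, hfdd⟩ := hARC
  have h2 : ∀ᵐ ω ∂P, ∀ j, T^[t j] (U₀ ω) ∈ Set.Ioo (0:ℝ) 1 :=
    (ae_all_iff).2 fun j => hμae (t j)
  have h1 : ∀ᵐ ω ∂P, ∀ j, Y (t j) ω ∈ Set.Ioo (0:ℝ) 1 :=
    (ae_all_iff).2 fun j => hYae (t j)
  have step1 : P {ω | ∀ j, Y (t j) ω ∈ A j} =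
      P {ω | ∀ j, Y (t j) ω ∈ A j ∩ Set.Ioo 0 1 ∧
        (fun t ω => T^[t] (U₀ ω)) (t j) ω ∈ Set.Ioo 0 1} := by
    apply measure_congr
    rw [Filter.eventuallyEq_set]
    filter_upwards [h1, h2] with ω hY hμ
    constructor
    · intro hmem j; exact ⟨⟨hmem j, hY j⟩, hμ j⟩
    · intro hmem j; exact (hmem j).1.1
  rw [step1, hfdd k t ht (fun j => A j ∩ Set.Ioo 0 1) (fun _ => Set.Ioo 0 1)
    (fun j => (hA j).inter measurableSet_Ioo) (fun _ => measurableSet_Ioo)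
    (fun j => Set.inter_subset_right) (fun _ => subset_rfl)]
  have step3 : ∫⁻ ω, ∏ j, ((Set.Ioo (0:ℝ) 1).indicator 1 (T^[t j] (U₀ ω)) *
        betaMeas ν (T^[t j] (U₀ ω)) (A j ∩ Set.Ioo 0 1)) ∂P =
      ∫⁻ ω, (fun z => ∏ j, betaMeas ν (T^[t j] z) (A j ∩ Set.Ioo 0 1)) (U₀ ω) ∂P := by
    apply lintegral_congr_ae
    filter_upwards [h2] with ω hμ
    refine Finset.prod_congr rfl fun j _ => ?_
    rw [Set.indicator_of_mem (hμ j), Pi.one_apply, one_mul]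
  rw [step3]
  have hg : Measurable fun z => ∏ j, betaMeas ν (T^[t j] z) (A j ∩ Set.Ioo 0 1) :=
    Finset.measurable_prod _ fun j _ =>
      (measurable_betaMeas_apply ν ((hA j).inter measurableSet_Ioo)).comp (hT.iterate (t j))
  rw [← lintegral_map hg hU₀, hlaw]

lemma shift_invariant {Ω : Type*} [MeasurableSpace Ω] (P : Measure Ω) [IsProbabilityMeasure P]
    (T : ℝ → ℝ) (hT : Measurable T) (lam : Measure ℝ)
    (hinv : ∀ A : Set ℝ, MeasurableSet A → lam (T ⁻¹' A) = lam A)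
    (U₀ : Ω → ℝ) (hU₀ : Measurable U₀) (hlaw : Measure.map U₀ P = lam)
    (ν : ℝ) (Y : ℕ → Ω → ℝ) (hARC : IsBetaARC P ν Y (fun t ω => T^[t] (U₀ ω)))
    (k : ℕ) (t : Fin k → ℕ) (ht : Function.Injective t)
    (A : Fin k → Set ℝ) (hA : ∀ j, MeasurableSet (A j)) (h : ℕ) :
    P {ω | ∀ j, Y (t j + h) ω ∈ A j} = P {ω | ∀ j, Y (t j) ω ∈ A j} := by
  have ht' : Function.Injective (fun j => t j + h) := fun a b hab =>
    ht (Nat.add_right_cancel hab)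
  rw [rect_formula P T hT lam U₀ hU₀ hlaw ν Y hARC k _ ht' A hA,
    rect_formula P T hT lam U₀ hU₀ hlaw ν Y hARC k t ht A hA]
  have hg : Measurable fun z => ∏ j, betaMeas ν (T^[t j] z) (A j ∩ Set.Ioo 0 1) :=
    Finset.measurable_prod _ fun j _ =>
      (measurable_betaMeas_apply ν ((hA j).inter measurableSet_Ioo)).comp (hT.iterate (t j))
  have heq : ∀ z, ∏ j, betaMeas ν (T^[t j + h] z) (A j ∩ Set.Ioo 0 1) =
      (fun z => ∏ j, betaMeas ν (T^[t j] z) (A j ∩ Set.Ioo 0 1)) (T^[h] z) := by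
    intro z
    refine Finset.prod_congr rfl fun j _ => ?_
    rw [Function.iterate_add_apply]
  calc ∫⁻ z, ∏ j, betaMeas ν (T^[t j + h] z) (A j ∩ Set.Ioo 0 1) ∂lam
      = ∫⁻ z, (fun z => ∏ j, betaMeas ν (T^[t j] z) (A j ∩ Set.Ioo 0 1)) (T^[h] z) ∂lam :=
        lintegral_congr heq
    _ = ∫⁻ z, ∏ j, betaMeas ν (T^[t j] z) (A j ∩ Set.Ioo 0 1)
          ∂(Measure.map (T^[h]) lam) := (lintegral_map hg (hT.iterate h)).symm
    _ = ∫⁻ z, ∏ j, betaMeas ν (T^[t j] z) (A j ∩ Set.Ioo 0 1) ∂lam := by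
        rw [map_iterate_eq hT hinv h]

lemma fdd_eq {Ω : Type*} [MeasurableSpace Ω] (P : Measure Ω) [IsProbabilityMeasure P]
    (T : ℝ → ℝ) (hT : Measurable T) (lam : Measure ℝ)
    (hinv : ∀ A : Set ℝ, MeasurableSet A → lam (T ⁻¹' A) = lam A)
    (U₀ : Ω → ℝ) (hU₀ : Measurable U₀) (hlaw : Measure.map U₀ P = lam)
    (ν : ℝ) (Y : ℕ → Ω → ℝ) (hARC : IsBetaARC P ν Y (fun t ω => T^[t] (U₀ ω)))
    (I : Finset ℕ) (h : ℕ) :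
    Measure.map (fun ω => fun i : I => Y (↑i + h) ω) P =
      Measure.map (fun ω => fun i : I => Y (↑i : ℕ) ω) P := by
  have hYm := hARC.1
  have m1 : Measurable (fun ω => fun i : I => Y (↑i + h) ω) :=
    measurable_pi_lambda _ fun i => hYm _
  have m2 : Measurable (fun ω => fun i : I => Y (↑i : ℕ) ω) :=
    measurable_pi_lambda _ fun i => hYm _
  haveI i1 : IsProbabilityMeasure (Measure.map (fun ω => fun i : I => Y (↑i + h) ω) P) :=
    Measure.isProbabilityMeasure_map m1.aemeasurable
  haveI i2 : IsProbabilityMeasure (Measure.map (fun ω => fun i : I => Y (↑i : ℕ) ω) P) :=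
    Measure.isProbabilityMeasure_map m2.aemeasurable
  refine ext_of_generate_finite _ generateFrom_pi.symm isPiSystem_pi ?_ (by simp)
  rintro _ ⟨A', hA', rfl⟩
  simp only [Set.mem_pi, Set.mem_setOf_eq] at hA'
  have hA'm : ∀ i, MeasurableSet (A' i) := fun i => hA' i (Set.mem_univ i)
  have hpi : MeasurableSet (Set.pi Set.univ A') := MeasurableSet.univ_pi hA'm
  rw [Measure.map_apply m1 hpi, Measure.map_apply m2 hpi]
  set e : Fin I.card ≃ I := I.equivFin.symm with he
  have htinj : Function.Injective (fun j : Fin I.card => ((e j : I) : ℕ)) := by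
    intro a b hab
    exact e.injective (Subtype.ext hab)
  have hset1 : (fun ω => fun i : I => Y (↑i + h) ω) ⁻¹' Set.pi Set.univ A' =
      {ω | ∀ j : Fin I.card, Y (((e j : I) : ℕ) + h) ω ∈ A' (e j)} := by
    ext ω
    simp only [Set.mem_preimage, Set.mem_pi, Set.mem_univ, forall_true_left,
      Set.mem_setOf_eq]
    constructor
    · intro H j; exact H (e j)
    · intro H i
      have := H (e.symm i)
      rwa [Equiv.apply_symm_apply] at this
  have hset2 : (fun ω => fun i : I => Y (↑i : ℕ) ω) ⁻¹' Set.pi Set.univ A' =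
      {ω | ∀ j : Fin I.card, Y ((e j : I) : ℕ) ω ∈ A' (e j)} := by
    ext ω
    simp only [Set.mem_preimage, Set.mem_pi, Set.mem_univ, forall_true_left,
      Set.mem_setOf_eq]
    constructor
    · intro H j; exact H (e j)
    · intro H i
      have := H (e.symm i)
      rwa [Equiv.apply_symm_apply] at this
  rw [hset1, hset2]
  exact shift_invariant P T hT lam hinv U₀ hU₀ hlaw ν Y hARC I.card
    (fun j => ((e j : I) : ℕ)) htinj (fun j => A' (e j)) (fun j => hA'm _) h

lemma proc_eq {Ω : Type*} [MeasurableSpace Ω] (P : Measure Ω) [IsProbabilityMeasure P]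
    (T : ℝ → ℝ) (hT : Measurable T) (lam : Measure ℝ)
    (hinv : ∀ A : Set ℝ, MeasurableSet A → lam (T ⁻¹' A) = lam A)
    (U₀ : Ω → ℝ) (hU₀ : Measurable U₀) (hlaw : Measure.map U₀ P = lam)
    (ν : ℝ) (Y : ℕ → Ω → ℝ) (hARC : IsBetaARC P ν Y (fun t ω => T^[t] (U₀ ω)))
    (h : ℕ) :
    Measure.map (fun ω => fun n : ℕ => Y (n + h) ω) P =
      Measure.map (fun ω => fun n : ℕ => Y n ω) P := by
  have hYm := hARC.1
  have m1 : Measurable (fun ω => fun n : ℕ => Y (n + h) ω) :=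
    measurable_pi_lambda _ fun n => hYm _
  have m2 : Measurable (fun ω => fun n : ℕ => Y n ω) :=
    measurable_pi_lambda _ fun n => hYm _
  haveI i1 : IsProbabilityMeasure (Measure.map (fun ω => fun n : ℕ => Y (n + h) ω) P) :=
    Measure.isProbabilityMeasure_map m1.aemeasurable
  haveI i2 : IsProbabilityMeasure (Measure.map (fun ω => fun n : ℕ => Y n ω) P) :=
    Measure.isProbabilityMeasure_map m2.aemeasurable
  refine ext_of_generate_finite _ generateFrom_measurableCylinders.symm
    isPiSystem_measurableCylinders ?_ (by simp)
  intro s hs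
  obtain ⟨I, S, hS, rfl⟩ := (mem_measurableCylinders s).1 hs
  have hms : MeasurableSet (cylinder I S) := MeasurableSet.cylinder (α := fun _ : ℕ => ℝ) I hS
  rw [Measure.map_apply m1 hms, Measure.map_apply m2 hms]
  have mf1 : Measurable (fun ω => fun i : I => Y (↑i + h) ω) :=
    measurable_pi_lambda _ fun i => hYm _
  have mf2 : Measurable (fun ω => fun i : I => Y (↑i : ℕ) ω) :=
    measurable_pi_lambda _ fun i => hYm _
  have hp1 : (fun ω => fun n : ℕ => Y (n + h) ω) ⁻¹' cylinder I S =
      (fun ω => fun i : I => Y (↑i + h) ω) ⁻¹' S := rfl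
  have hp2 : (fun ω => fun n : ℕ => Y n ω) ⁻¹' cylinder I S =
      (fun ω => fun i : I => Y (↑i : ℕ) ω) ⁻¹' S := rfl
  rw [hp1, hp2, ← Measure.map_apply mf1 hS, ← Measure.map_apply mf2 hS,
    fdd_eq P T hT lam hinv U₀ hU₀ hlaw ν Y hARC I h]

/-- **Corollary 4, pure chaotic βARC model.** Let `T : [0,1] → [0,1]` be Borel
measurable with a `T`-invariant probability measure `lam` absolutely continuous w.r.t. Lebesgue
measure and with `lam((0,1)) = 1`.  Let `U₀` have law `lam`, `μ t := T^[t] ∘ U₀`, `ν > 0`, and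
let `Y` have the βARC conditional structure with `μ` and precision `ν`.  Then `Y` is strictly
stationary and for each `t` the law of `Y t` is absolutely continuous w.r.t. Lebesgue measure,
with density `y ↦ ∫₀¹ Γ(ν)/(Γ(νz)Γ(ν(1-z))) y^{νz-1}(1-y)^{ν(1-z)-1} dlam(z)` on `(0,1)`. -/
theorem stmt5 {Ω : Type*} [MeasurableSpace Ω] (P : Measure Ω) [IsProbabilityMeasure P]
    (T : ℝ → ℝ) (hT : Measurable T) (hTmaps : Set.MapsTo T (Set.Icc 0 1) (Set.Icc 0 1))
    (lam : Measure ℝ) [IsProbabilityMeasure lam]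
    (hinv : ∀ A : Set ℝ, MeasurableSet A → lam (T ⁻¹' A) = lam A)
    (hac : lam ≪ volume) (h01 : lam (Set.Ioo 0 1) = 1)
    (U₀ : Ω → ℝ) (hU₀ : Measurable U₀) (hlaw : Measure.map U₀ P = lam)
    (ν : ℝ) (hν : 0 < ν) (Y : ℕ → Ω → ℝ)
    (hARC : IsBetaARC P ν Y (fun t ω => T^[t] (U₀ ω))) :
    StrictlyStationary P Y ∧
      ∀ t : ℕ, Measure.map (Y t) P =
        volume.withDensity (fun y => ∫⁻ z in Set.Ioo (0 : ℝ) 1,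
          ENNReal.ofReal (betaDen ν z y) ∂lam) := by
  have hYm := hARC.1
  constructor
  · -- strict stationarity
    intro k t h
    have hproc := proc_eq P T hT lam hinv U₀ hU₀ hlaw ν Y hARC h
    have m1 : Measurable (fun ω => fun n : ℕ => Y (n + h) ω) :=
      measurable_pi_lambda _ fun n => hYm _
    have m2 : Measurable (fun ω => fun n : ℕ => Y n ω) :=
      measurable_pi_lambda _ fun n => hYm _
    have hm : Measurable (fun v : ℕ → ℝ => fun j : Fin k => v (t j)) :=
      measurable_pi_lambda _ fun j => measurable_pi_apply _
    have c1 : (fun ω => fun j : Fin k => Y (t j + h) ω) =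
        (fun v : ℕ → ℝ => fun j : Fin k => v (t j)) ∘ (fun ω => fun n : ℕ => Y (n + h) ω) :=
      rfl
    have c2 : (fun ω => fun j : Fin k => Y (t j) ω) =
        (fun v : ℕ → ℝ => fun j : Fin k => v (t j)) ∘ (fun ω => fun n : ℕ => Y n ω) :=
      rfl
    rw [c1, c2, ← Measure.map_map hm m1, ← Measure.map_map hm m2, hproc]
  · -- marginal density
    intro t
    have hres : lam.restrict (Set.Ioo 0 1) = lam := by
      apply Measure.restrict_eq_self_of_ae_mem
      have hcompl : lam (Set.Ioo (0:ℝ) 1)ᶜ = 0 := by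
        have := measure_compl (μ := lam) (s := Set.Ioo 0 1) measurableSet_Ioo
          (measure_ne_top lam _)
        rw [h01, measure_univ] at this
        simpa using this
      rw [Filter.eventually_iff, mem_ae_iff]
      exact hcompl
    refine Measure.ext fun A hA => ?_
    rw [Measure.map_apply (hYm t) hA]
    have hsingle : Y t ⁻¹' A = {ω | ∀ j : Fin 1, Y ((fun _ : Fin 1 => t) j) ω ∈
        (fun _ : Fin 1 => A) j} := by
      ext ω
      simp only [Set.mem_preimage, Set.mem_setOf_eq]
      exact ⟨fun H j => H, fun H => H 0⟩
    have hinj1 : Function.Injective (fun _ : Fin 1 => t) := fun a b _ =>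
      Subsingleton.elim a b
    rw [hsingle, rect_formula P T hT lam U₀ hU₀ hlaw ν Y hARC 1 (fun _ => t) hinj1
      (fun _ => A) (fun _ => hA)]
    have hprod1 : ∀ z : ℝ, (∏ j : Fin 1, betaMeas ν (T^[(fun _ : Fin 1 => t) j] z)
        ((fun _ : Fin 1 => A) j ∩ Set.Ioo 0 1)) = betaMeas ν (T^[t] z) (A ∩ Set.Ioo 0 1) :=
      fun z => Fin.prod_univ_one _
    rw [lintegral_congr hprod1]
    have hg : Measurable fun z => betaMeas ν z (A ∩ Set.Ioo 0 1) :=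
      measurable_betaMeas_apply ν (hA.inter measurableSet_Ioo)
    have hchg : ∫⁻ z, betaMeas ν (T^[t] z) (A ∩ Set.Ioo 0 1) ∂lam =
        ∫⁻ z, betaMeas ν z (A ∩ Set.Ioo 0 1) ∂lam := by
      rw [← lintegral_map hg (hT.iterate t), map_iterate_eq hT hinv t]
    rw [hchg]
    nth_rewrite 1 [← hres]
    -- now: ∫⁻ z in Ioo 0 1, betaMeas ν z (A ∩ Ioo 0 1) ∂lam = withDensity ... A
    have hbm : ∀ z, betaMeas ν z (A ∩ Set.Ioo 0 1) =
        ∫⁻ y in A, ENNReal.ofReal (betaDen ν z y) := by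
      intro z
      rw [← betaMeas_inter ν z hA, betaMeas, withDensity_apply _ hA]
    rw [lintegral_congr hbm]
    rw [withDensity_apply _ hA]
    exact lintegral_lintegral_swap
      (μ := lam.restrict (Set.Ioo 0 1)) (ν := volume.restrict A)
      (f := fun z y => ENNReal.ofReal (betaDen ν z y))
      ((measurable_betaDen ν).ennreal_ofReal.aemeasurable)
end

section
/- Let (Y_t)_{t≥1} be a strictly stationary process with values in [0,1] on a probability space (Ω, F, P), and let φ : [0,1] → ℝ be Borel measurable with E[φ(Y_1)²] < ∞. Assume that there exists q ∈ [0,1) such that ∑_{k=1}^∞ |Cov(φ(Y_1), φ(Y_{1+k}))| / k^q < ∞. Then (1/n) ∑_{ℓ=1}^{n} φ(Y_ℓ) → E[φ(Y_1)] almost surely as n → ∞. -/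
open MeasureTheory Set

/-- Covariance `Cov(X,Z) = E[XZ] - E[X]E[Z]`. -/
noncomputable def cov {Ω : Type*} [MeasurableSpace Ω] (P : Measure Ω) (X Z : Ω → ℝ) : ℝ :=
  ∫ ω, X ω * Z ω ∂P - (∫ ω, X ω ∂P) * (∫ ω, Z ω ∂P)

/-!
Centre the process, `Zₜ = φ(Yₜ) - E φ(Y₀)`. Stationarity makes `E[Zᵢ Zⱼ] = γ(|i - j|)` with
`γ(k) = Cov(φ(Y₀), φ(Yₖ))`, and the weighted summability of `γ` gives
`∑_{d<n} |γ(d)| = O(n^q)`, hence `E[Sₙ²] = O(n^(1+q))` for `Sₙ = Z₀ + ⋯ + Zₙ₋₁`.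
Along `Nₘ = (m+1)^p` with `p(1-q) ≥ 2` this makes `E[(S_{Nₘ}/Nₘ)²] = O(m⁻²)`, which is
summable, so `S_{Nₘ}/Nₘ → 0` a.s. Between `Nₘ` and `Nₘ₊₁` the partial sums move by at most
`∑ |Zₗ|` over the block, whose second moment is `O((Nₘ₊₁ - Nₘ)²) = O(Nₘ²/m²)`, so the
oscillation over blocks vanishes a.s. as well.
-/

open ProbabilityTheory Filter Finset Topology

lemma sum_range_comp_dist_le_two_mul {f : ℕ → ℝ} (hf : ∀ d, 0 ≤ f d) {n i : ℕ} (hi : i < n) :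
    ∑ j ∈ range n, f (Nat.dist i j) ≤ 2 * ∑ d ∈ range n, f d := by
  have hpart : ∀ t ⊆ range n, Set.InjOn (Nat.dist i) t →
      ∑ j ∈ t, f (Nat.dist i j) ≤ ∑ d ∈ range n, f d := by
    intro t ht hinj
    rw [← sum_image hinj]
    refine sum_le_sum_of_subset_of_nonneg ?_ fun d _ _ => hf d
    intro d hd
    obtain ⟨j, hj, rfl⟩ := mem_image.1 hd
    have := Finset.mem_range.1 (ht hj)
    simp only [Finset.mem_range, Nat.dist]
    omega
  rw [← sum_filter_add_sum_filter_not (range n) (· ≤ i), two_mul]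
  refine add_le_add (hpart _ (filter_subset _ _) ?_) (hpart _ (filter_subset _ _) ?_) <;>
  · intro j hj k hk hjk
    simp only [coe_filter, Set.mem_ofPred_eq, Nat.dist] at hj hk hjk
    omega

lemma sum_range_succ_le_mul_rpow {a : ℕ → ℝ} (ha : ∀ k, 0 ≤ a k) {q : ℝ} (hq : 0 ≤ q)
    (hsum : Summable fun k : ℕ => a (k + 1) / ((k : ℝ) + 1) ^ q) (n : ℕ) :
    ∑ k ∈ range (n + 1), a k
      ≤ (a 0 + ∑' k : ℕ, a (k + 1) / ((k : ℝ) + 1) ^ q) * ((n : ℝ) + 1) ^ q := by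
  have hn : (1 : ℝ) ≤ ((n : ℝ) + 1) ^ q := Real.one_le_rpow (by simp) hq
  have htail : ∑ k ∈ range n, a (k + 1)
      ≤ (∑' k : ℕ, a (k + 1) / ((k : ℝ) + 1) ^ q) * ((n : ℝ) + 1) ^ q := by
    calc ∑ k ∈ range n, a (k + 1)
        = ∑ k ∈ range n, a (k + 1) / ((k : ℝ) + 1) ^ q * ((k : ℝ) + 1) ^ q := by
          refine sum_congr rfl fun k _ => (div_mul_cancel₀ _ ?_).symm
          positivity
      _ ≤ ∑ k ∈ range n, a (k + 1) / ((k : ℝ) + 1) ^ q * ((n : ℝ) + 1) ^ q := by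
          refine sum_le_sum fun k hk => mul_le_mul_of_nonneg_left ?_ (by positivity [ha (k + 1)])
          have : (k : ℝ) ≤ n := by exact_mod_cast (Finset.mem_range.1 hk).le
          exact Real.rpow_le_rpow (by positivity) (by linarith) hq
      _ ≤ (∑' k : ℕ, a (k + 1) / ((k : ℝ) + 1) ^ q) * ((n : ℝ) + 1) ^ q := by
          rw [← sum_mul]
          exact mul_le_mul_of_nonneg_right
            (hsum.sum_le_tsum _ fun k _ => by positivity [ha (k + 1)]) (by positivity)
  rw [sum_range_succ', add_mul]
  nlinarith [ha 0]

lemma tendsto_div_of_tendsto_subseq_div {s b : ℕ → ℝ} {N : ℕ → ℕ} (hN : StrictMono N)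
    (hN0 : 0 < N 0) (hs : Tendsto (fun m => s (N m) / N m) atTop (𝓝 0))
    (hb : Tendsto (fun m => b m / N m) atTop (𝓝 0))
    (hosc : ∀ m n, N m ≤ n → n ≤ N (m + 1) → |s n - s (N m)| ≤ b m) :
    Tendsto (fun n => s n / n) atTop (𝓝 0) := by
  rw [Metric.tendsto_atTop] at hs hb ⊢
  intro ε hε
  obtain ⟨M₁, hM₁⟩ := hs (ε / 2) (half_pos hε)
  obtain ⟨M₂, hM₂⟩ := hb (ε / 2) (half_pos hε)
  refine ⟨N (max M₁ M₂) + 1, fun n hn => ?_⟩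
  obtain ⟨m, hmn, hnm⟩ := hN.exists_between_of_tendsto_atTop hN.tendsto_atTop
    (x := n) (by have := hN.monotone (Nat.zero_le (max M₁ M₂)); omega)
  have hMm : max M₁ M₂ ≤ m := by
    by_contra! h
    have := hN.monotone (show m + 1 ≤ max M₁ M₂ by omega)
    omega
  have hNm : (0 : ℝ) < N m := by
    have := hN.monotone (Nat.zero_le m); exact_mod_cast hN0.trans_le this
  have hNn : (N m : ℝ) ≤ n := by exact_mod_cast hmn.le
  have hb0 : 0 ≤ b m := (abs_nonneg _).trans (hosc m _ le_rfl (hN.monotone m.le_succ))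
  have h₁ := hM₁ m (le_of_max_le_left hMm)
  have h₂ := hM₂ m (le_of_max_le_right hMm)
  rw [Real.dist_eq, sub_zero] at h₁ h₂ ⊢
  calc |s n / n| = |s n| / n := by rw [abs_div, Nat.abs_cast]
    _ ≤ (|s (N m)| + b m) / N m := by
        refine div_le_div₀ (by positivity) ?_ hNm hNn
        have := hosc m n hmn.le hnm
        have := abs_sub_abs_le_abs_sub (s n) (s (N m))
        linarith
    _ ≤ |s (N m) / N m| + |b m / N m| := by
        rw [add_div, abs_div, Nat.abs_cast]
        gcongr
        exact le_abs_self _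
    _ < ε := by linarith

lemma pow_rpow_one_add_div_sq_le {x q : ℝ} {p : ℕ} (hx : 1 ≤ x) (hp : 2 ≤ p * (1 - q)) :
    (x ^ p) ^ (1 + q) / (x ^ p) ^ 2 ≤ 1 / x ^ 2 := by
  have hx0 : 0 < x := by linarith
  rw [← Real.rpow_natCast_mul hx0.le, ← Real.rpow_natCast, ← Real.rpow_natCast,
    ← Real.rpow_natCast, ← Real.rpow_mul hx0.le, ← Real.rpow_sub hx0, one_div,
    ← Real.rpow_neg hx0.le]
  exact Real.rpow_le_rpow_of_exponent_le hx (by push_cast; nlinarith)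

lemma add_one_pow_sub_pow_div_le {x : ℝ} (hx : 1 ≤ x) (p : ℕ) :
    ((x + 1) ^ p - x ^ p) / x ^ p ≤ p * 2 ^ p / x := by
  have hx0 : 0 < x := by linarith
  have hdiff : (x + 1) ^ p - x ^ p ≤ p * (2 * x) ^ (p - 1) := by
    have h := abs_pow_sub_pow_le (x + 1) x p
    rw [add_sub_cancel_left, abs_one, one_mul, abs_of_pos (by linarith : 0 < x + 1),
      abs_of_pos hx0, max_eq_left (by linarith)] at h
    refine (le_abs_self _).trans (h.trans ?_)
    gcongr
    linarith
  rcases Nat.eq_zero_or_pos p with rfl | hp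
  · simp
  rw [div_le_div_iff₀ (by positivity) hx0]
  calc ((x + 1) ^ p - x ^ p) * x ≤ p * (2 * x) ^ (p - 1) * x := by gcongr
    _ = p * 2 ^ (p - 1) * x ^ p := by
        rw [mul_pow, mul_assoc, mul_assoc, ← pow_succ, Nat.sub_add_cancel hp, mul_assoc]
    _ ≤ p * 2 ^ p * x ^ p := by gcongr; exacts [one_le_two, Nat.sub_le p 1]

section

variable {Ω : Type*} [MeasurableSpace Ω] {P : Measure Ω}

lemma ae_tendsto_zero_of_summable_integral_sq {W : ℕ → Ω → ℝ}
    (hint : ∀ m, Integrable (fun ω => W m ω ^ 2) P)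
    (hsum : Summable fun m => ∫ ω, W m ω ^ 2 ∂P) :
    ∀ᵐ ω ∂P, Tendsto (fun m => W m ω) atTop (𝓝 0) := by
  have hmeas : ∀ m, AEMeasurable (fun ω => ENNReal.ofReal (W m ω ^ 2)) P := fun m =>
    (hint m).aestronglyMeasurable.aemeasurable.ennreal_ofReal
  have hlint : ∫⁻ ω, ∑' m, ENNReal.ofReal (W m ω ^ 2) ∂P ≠ ⊤ := by
    rw [lintegral_tsum hmeas]
    have hofReal : ∀ m,
        ∫⁻ ω, ENNReal.ofReal (W m ω ^ 2) ∂P = ENNReal.ofReal (∫ ω, W m ω ^ 2 ∂P) := fun m =>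
      (ofReal_integral_eq_lintegral_ofReal (hint m) (ae_of_all _ fun ω => sq_nonneg _)).symm
    simp_rw [hofReal, ← ENNReal.ofReal_tsum_of_nonneg
      (fun m => integral_nonneg fun ω => sq_nonneg _) hsum]
    exact ENNReal.ofReal_ne_top
  filter_upwards [ae_lt_top' (AEMeasurable.tsum hmeas) hlint] with ω hω
  have hsq : Tendsto (fun m => W m ω ^ 2) atTop (𝓝 0) := by
    have := (ENNReal.summable_toReal hω.ne).tendsto_atTop_zero
    simpa only [ENNReal.toReal_ofReal (sq_nonneg _)] using this
  refine (tendsto_zero_iff_abs_tendsto_zero _).2 ?_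
  simpa only [Function.comp_def, Real.sqrt_sq_eq_abs, Real.sqrt_zero] using hsq.sqrt

lemma integral_sq_sum_le_of_integral_mul_eq {Z : ℕ → Ω → ℝ} (hZ : ∀ i, MemLp (Z i) 2 P)
    {γ : ℕ → ℝ} (hγ : ∀ i j, ∫ ω, Z i ω * Z j ω ∂P = γ (Nat.dist i j)) (n : ℕ) :
    ∫ ω, (∑ i ∈ range n, Z i ω) ^ 2 ∂P ≤ 2 * n * ∑ d ∈ range n, |γ d| := by
  have hint : ∀ i j, Integrable (fun ω => Z i ω * Z j ω) P :=
    fun i j => (hZ i).integrable_mul (hZ j)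
  calc ∫ ω, (∑ i ∈ range n, Z i ω) ^ 2 ∂P
      = ∑ i ∈ range n, ∑ j ∈ range n, γ (Nat.dist i j) := by
        simp_rw [sq, sum_mul_sum]
        rw [integral_finsetSum _ fun i _ => integrable_finsetSum _ fun j _ => hint i j]
        exact sum_congr rfl fun i _ => (integral_finsetSum _ fun j _ => hint i j).trans
          (sum_congr rfl fun j _ => hγ i j)
    _ ≤ ∑ i ∈ range n, 2 * ∑ d ∈ range n, |γ d| := by
        refine sum_le_sum fun i hi => ?_
        exact (sum_le_sum fun j _ => le_abs_self _).trans
          (sum_range_comp_dist_le_two_mul (fun d => abs_nonneg (γ d)) (Finset.mem_range.1 hi))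
    _ = 2 * n * ∑ d ∈ range n, |γ d| := by rw [sum_const, card_range, nsmul_eq_mul]; ring

lemma integral_sq_sum_abs_le {Z : ℕ → Ω → ℝ} (hZ : ∀ i, MemLp (Z i) 2 P) {σ : ℝ}
    (hσ : ∀ i, ∫ ω, Z i ω ^ 2 ∂P ≤ σ) (s : Finset ℕ) :
    ∫ ω, (∑ i ∈ s, |Z i ω|) ^ 2 ∂P ≤ (#s : ℝ) ^ 2 * σ := by
  have hint : ∀ i, Integrable (fun ω => Z i ω ^ 2) P := fun i => (hZ i).integrable_sq
  calc ∫ ω, (∑ i ∈ s, |Z i ω|) ^ 2 ∂P ≤ ∫ ω, #s * ∑ i ∈ s, Z i ω ^ 2 ∂P := by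
        refine integral_mono_of_nonneg (ae_of_all _ fun ω => sq_nonneg _)
          ((integrable_finsetSum _ fun i _ => hint i).const_mul _) (ae_of_all _ fun ω => ?_)
        simpa only [sq_abs] using sq_sum_le_card_mul_sum_sq (s := s) (f := fun i => |Z i ω|)
    _ ≤ (#s : ℝ) ^ 2 * σ := by
        rw [integral_const_mul, integral_finsetSum _ fun i _ => hint i, sq, mul_assoc]
        refine mul_le_mul_of_nonneg_left ?_ (Nat.cast_nonneg _)
        simpa using sum_le_sum fun i (_ : i ∈ s) => hσ i

lemma ae_tendsto_div_of_integral_sq_div_le {F : ℕ → Ω → ℝ} (hF : ∀ m, MemLp (F m) 2 P)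
    {c : ℕ → ℝ} {C : ℝ} (hbound : ∀ m, (∫ ω, F m ω ^ 2 ∂P) / c m ^ 2 ≤ C / ((m : ℝ) + 1) ^ 2) :
    ∀ᵐ ω ∂P, Tendsto (fun m => F m ω / c m) atTop (𝓝 0) := by
  have hint : ∀ m, Integrable (fun ω => (F m ω / c m) ^ 2) P := fun m => by
    simpa only [div_pow] using (hF m).integrable_sq.div_const _
  have hsummable : Summable fun m : ℕ => C / ((m : ℝ) + 1) ^ 2 := by
    simpa [div_eq_mul_inv] using
      ((summable_nat_add_iff 1).2 (Real.summable_one_div_nat_pow.2 one_lt_two)).mul_left C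
  refine ae_tendsto_zero_of_summable_integral_sq hint
    (hsummable.of_nonneg_of_le (fun m => integral_nonneg fun ω => sq_nonneg _) fun m => ?_)
  simpa only [div_pow, integral_div] using hbound m

theorem ae_tendsto_sum_div_of_integral_sq_le {Z : ℕ → Ω → ℝ} (hZ : ∀ i, MemLp (Z i) 2 P)
    {σ K q : ℝ} (hq : q < 1) (hσ : ∀ i, ∫ ω, Z i ω ^ 2 ∂P ≤ σ)
    (hS : ∀ n, ∫ ω, (∑ i ∈ range n, Z i ω) ^ 2 ∂P ≤ K * (n : ℝ) ^ (1 + q)) :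
    ∀ᵐ ω ∂P, Tendsto (fun n : ℕ => (∑ i ∈ range n, Z i ω) / n) atTop (𝓝 0) := by
  obtain ⟨p, hp⟩ : ∃ p : ℕ, 2 ≤ p * (1 - q) := by
    obtain ⟨p, hp⟩ := exists_nat_ge (2 / (1 - q))
    exact ⟨p, (div_le_iff₀ (by linarith)).1 hp⟩
  have hp0 : p ≠ 0 := by rintro rfl; norm_num at hp
  set N : ℕ → ℕ := fun m => (m + 1) ^ p with hN
  have hNcast : ∀ m, (N m : ℝ) = ((m : ℝ) + 1) ^ p := fun m => by push_cast [hN]; rfl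
  have hNmono : StrictMono N := (Nat.pow_left_strictMono hp0).comp fun a b h => by omega
  have hm1 : ∀ m : ℕ, (1 : ℝ) ≤ (m : ℝ) + 1 := fun m => by simp
  have hσ0 : 0 ≤ σ := (integral_nonneg fun ω => sq_nonneg _).trans (hσ 0)
  have hK0 : 0 ≤ K := by simpa using (integral_nonneg fun ω => sq_nonneg _).trans (hS 1)
  have hSsub : ∀ᵐ ω ∂P, Tendsto (fun m => (∑ i ∈ range (N m), Z i ω) / N m) atTop (𝓝 0) := by
    refine ae_tendsto_div_of_integral_sq_div_le (C := K)
      (fun m => memLp_finsetSum _ fun i _ => hZ i) fun m => ?_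
    calc (∫ ω, (∑ i ∈ range (N m), Z i ω) ^ 2 ∂P) / (N m : ℝ) ^ 2
        ≤ K * (N m : ℝ) ^ (1 + q) / (N m : ℝ) ^ 2 := by gcongr; exact hS _
      _ ≤ K / ((m : ℝ) + 1) ^ 2 := by
          rw [mul_div_assoc, hNcast, div_eq_mul_one_div K]
          exact mul_le_mul_of_nonneg_left (pow_rpow_one_add_div_sq_le (hm1 m) hp) hK0
  set T : ℕ → Ω → ℝ := fun m ω => ∑ i ∈ Ico (N m) (N (m + 1)), |Z i ω|
  have hTsub : ∀ᵐ ω ∂P, Tendsto (fun m => T m ω / N m) atTop (𝓝 0) := by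
    refine ae_tendsto_div_of_integral_sq_div_le (C := (p * 2 ^ p) ^ 2 * σ)
      (fun m => memLp_finsetSum _ fun i _ => (hZ i).abs) fun m => ?_
    have hratio : ((N (m + 1) - N m : ℕ) : ℝ) / N m ≤ p * 2 ^ p / ((m : ℝ) + 1) := by
      rw [Nat.cast_sub (hNmono.monotone m.le_succ), hNcast, hNcast]
      push_cast
      exact add_one_pow_sub_pow_div_le (hm1 m) p
    calc (∫ ω, T m ω ^ 2 ∂P) / (N m : ℝ) ^ 2
        ≤ (((N (m + 1) - N m : ℕ) : ℝ) / N m) ^ 2 * σ := by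
          rw [div_pow, div_mul_eq_mul_div]
          gcongr
          simpa using integral_sq_sum_abs_le hZ hσ (Ico (N m) (N (m + 1)))
      _ ≤ (p * 2 ^ p / ((m : ℝ) + 1)) ^ 2 * σ := by gcongr
      _ = (p * 2 ^ p) ^ 2 * σ / ((m : ℝ) + 1) ^ 2 := by rw [div_pow]; ring
  filter_upwards [hSsub, hTsub] with ω hSω hTω
  refine tendsto_div_of_tendsto_subseq_div hNmono (by positivity) hSω hTω fun m n hmn hnm => ?_
  rw [← sum_range_add_sum_Ico _ hmn, add_sub_cancel_left]
  exact (abs_sum_le_sum_abs _ _).trans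
    (sum_le_sum_of_subset_of_nonneg (Ico_subset_Ico le_rfl hnm) fun _ _ _ => abs_nonneg _)

namespace StrictlyStationary

variable {E F : Type*} [MeasurableSpace E] [MeasurableSpace F] {Z : ℕ → Ω → E}

lemma comp (hZ : StrictlyStationary P Z) (hmeas : ∀ t, Measurable (Z t)) {g : E → F}
    (hg : Measurable g) : StrictlyStationary P fun t ω => g (Z t ω) := by
  intro k t h
  have hG : Measurable fun (v : Fin k → E) j => g (v j) :=
    measurable_pi_lambda _ fun j => hg.comp (measurable_pi_apply j)
  have hF : ∀ s : Fin k → ℕ, Measurable fun ω j => Z (s j) ω :=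
    fun s => measurable_pi_lambda _ fun j => hmeas (s j)
  have := congrArg (Measure.map fun (v : Fin k → E) j => g (v j)) (hZ k t h)
  rwa [Measure.map_map hG (hF _), Measure.map_map hG (hF _)] at this

lemma identDistrib_pair (hZ : StrictlyStationary P Z) (hmeas : ∀ t, Measurable (Z t))
    (i j h : ℕ) :
    IdentDistrib (fun ω => (Z (i + h) ω, Z (j + h) ω)) (fun ω => (Z i ω, Z j ω)) P P where
  aemeasurable_fst := ((hmeas _).prodMk (hmeas _)).aemeasurable
  aemeasurable_snd := ((hmeas _).prodMk (hmeas _)).aemeasurable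
  map_eq := by
    have hG : Measurable fun v : Fin 2 → E => (v 0, v 1) :=
      (measurable_pi_apply 0).prodMk (measurable_pi_apply 1)
    have hF : ∀ s : Fin 2 → ℕ, Measurable fun ω k => Z (s k) ω :=
      fun s => measurable_pi_lambda _ fun k => hmeas (s k)
    have := congrArg (Measure.map fun v : Fin 2 → E => (v 0, v 1)) (hZ 2 ![i, j] h)
    rwa [Measure.map_map hG (hF _), Measure.map_map hG (hF _)] at this

lemma identDistrib (hZ : StrictlyStationary P Z) (hmeas : ∀ t, Measurable (Z t)) (t : ℕ) :
    IdentDistrib (Z t) (Z 0) P P := by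
  simpa [Function.comp_def] using (hZ.identDistrib_pair hmeas 0 0 t).comp measurable_fst

lemma covariance_add_add {X : ℕ → Ω → ℝ} (hX : StrictlyStationary P X)
    (hmeas : ∀ t, Measurable (X t)) (i j h : ℕ) :
    cov[X (i + h), X (j + h); P] = cov[X i, X j; P] := by
  have hpair : ∀ a b, AEMeasurable (fun ω => (X a ω, X b ω)) P :=
    fun a b => ((hmeas a).prodMk (hmeas b)).aemeasurable
  calc cov[X (i + h), X (j + h); P]
      = cov[Prod.fst, Prod.snd; P.map fun ω => (X (i + h) ω, X (j + h) ω)] :=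
        (covariance_map measurable_fst.aestronglyMeasurable measurable_snd.aestronglyMeasurable
          (hpair _ _)).symm
    _ = cov[Prod.fst, Prod.snd; P.map fun ω => (X i ω, X j ω)] := by
        rw [(hX.identDistrib_pair hmeas i j h).map_eq]
    _ = cov[X i, X j; P] :=
        covariance_map measurable_fst.aestronglyMeasurable measurable_snd.aestronglyMeasurable
          (hpair _ _)

lemma covariance_eq_dist {X : ℕ → Ω → ℝ} (hX : StrictlyStationary P X)
    (hmeas : ∀ t, Measurable (X t)) (i j : ℕ) :
    cov[X i, X j; P] = cov[X 0, X (Nat.dist i j); P] := by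
  wlog hij : i ≤ j generalizing i j
  · rw [covariance_comm, this j i (le_of_not_ge hij), Nat.dist_comm]
  obtain ⟨k, rfl⟩ := Nat.exists_eq_add_of_le hij
  rw [Nat.dist_eq_sub_of_le hij, Nat.add_sub_cancel_left, ← hX.covariance_add_add hmeas 0 k i,
    zero_add, add_comm k]

end StrictlyStationary

lemma cov_eq_covariance [IsProbabilityMeasure P] {X Y : Ω → ℝ} (hX : MemLp X 2 P)
    (hY : MemLp Y 2 P) : cov P X Y = cov[X, Y; P] :=
  (covariance_eq_sub hX hY).symm

theorem StrictlyStationary.ae_tendsto_average [IsProbabilityMeasure P] {X : ℕ → Ω → ℝ}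
    (hX : StrictlyStationary P X) (hmeas : ∀ t, Measurable (X t)) (hL2 : MemLp (X 0) 2 P)
    {q : ℝ} (hq : q ∈ Set.Ico 0 1)
    (hcov : Summable fun k : ℕ => |cov P (X 0) (X (k + 1))| / ((k : ℝ) + 1) ^ q) :
    ∀ᵐ ω ∂P, Tendsto (fun n : ℕ => (1 / (n : ℝ)) * ∑ ℓ ∈ range n, X ℓ ω) atTop
      (𝓝 (∫ ω, X 0 ω ∂P)) := by
  set μ := ∫ ω, X 0 ω ∂P
  set γ : ℕ → ℝ := fun k => cov[X 0, X k; P]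
  have hXL2 : ∀ t, MemLp (X t) 2 P := fun t => (hX.identDistrib hmeas t).memLp_iff.2 hL2
  have hmean : ∀ t, ∫ ω, X t ω ∂P = μ := fun t => (hX.identDistrib hmeas t).integral_eq
  have hZ : ∀ t, MemLp (fun ω => X t ω - μ) 2 P := fun t => (hXL2 t).sub (memLp_const μ)
  have hγ : ∀ i j, ∫ ω, (X i ω - μ) * (X j ω - μ) ∂P = γ (Nat.dist i j) := fun i j => by
    rw [show γ (Nat.dist i j) = cov[X 0, X (Nat.dist i j); P] from rfl,
      ← hX.covariance_eq_dist hmeas, covariance, hmean, hmean]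
  have hγsum : Summable fun k : ℕ => |γ (k + 1)| / ((k : ℝ) + 1) ^ q := by
    simpa only [cov_eq_covariance (hXL2 0) (hXL2 _)] using hcov
  set C := ∑' k : ℕ, |γ (k + 1)| / ((k : ℝ) + 1) ^ q
  have hS : ∀ n : ℕ, ∫ ω, (∑ i ∈ range n, (X i ω - μ)) ^ 2 ∂P
      ≤ 2 * (|γ 0| + C) * (n : ℝ) ^ (1 + q) := by
    have hq1 : 1 + q ≠ 0 := by linarith [hq.1]
    rintro (_ | n)
    · simp [Real.zero_rpow hq1]
    calc ∫ ω, (∑ i ∈ range (n + 1), (X i ω - μ)) ^ 2 ∂P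
        ≤ 2 * (n + 1 : ℕ) * ∑ d ∈ range (n + 1), |γ d| :=
          integral_sq_sum_le_of_integral_mul_eq hZ hγ (n + 1)
      _ ≤ 2 * ((n : ℝ) + 1) * ((|γ 0| + C) * ((n : ℝ) + 1) ^ q) := by
          push_cast
          gcongr
          exact sum_range_succ_le_mul_rpow (fun k => abs_nonneg (γ k)) hq.1 hγsum n
      _ = 2 * (|γ 0| + C) * ((n + 1 : ℕ) : ℝ) ^ (1 + q) := by
          rw [Nat.cast_succ, Real.rpow_one_add' (by positivity) hq1]; ring
  have hσ : ∀ i, ∫ ω, (X i ω - μ) ^ 2 ∂P ≤ γ 0 := fun i => by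
    simp_rw [sq, hγ, Nat.dist_self, le_refl]
  filter_upwards [ae_tendsto_sum_div_of_integral_sq_le hZ hq.2 hσ hS] with ω hω
  refine (zero_add μ ▸ hω.add_const μ).congr' ((eventually_ne_atTop 0).mono fun n hn => ?_)
  rw [sum_sub_distrib, sum_const, card_range, nsmul_eq_mul]
  field_simp
  ring

end

theorem stmt10_general {Ω : Type*} [MeasurableSpace Ω] (P : Measure Ω) [IsProbabilityMeasure P]
    (Y : ℕ → Ω → ℝ) (hYmeas : ∀ t, Measurable (Y t))
    (hstat : StrictlyStationary P Y)
    (φ : ℝ → ℝ) (hφ : Measurable φ) (hL2 : MemLp (fun ω => φ (Y 0 ω)) 2 P)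
    (q : ℝ) (hq : q ∈ Set.Ico (0 : ℝ) 1)
    (hcov : Summable fun k : ℕ =>
      |cov P (fun ω => φ (Y 0 ω)) (fun ω => φ (Y (k + 1) ω))| / ((k : ℝ) + 1) ^ q) :
    ∀ᵐ ω ∂P, Filter.Tendsto
      (fun n : ℕ => (1 / (n : ℝ)) * ∑ ℓ ∈ Finset.range n, φ (Y ℓ ω))
      Filter.atTop (nhds (∫ ω', φ (Y 0 ω') ∂P)) :=
  (hstat.comp hYmeas hφ).ae_tendsto_average (fun t => hφ.comp (hYmeas t)) hL2 hq hcov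

/-- **Remark 8: Birkhoff-type theorem.** Let `(Y t)` be a strictly stationary
`[0,1]`-valued process and `φ : [0,1] → ℝ` Borel measurable with `E[φ(Y 0)²] < ∞`.  If for
some `q ∈ [0,1)` we have `∑_{k≥1} |Cov(φ(Y 0), φ(Y k))|/k^q < ∞`, then
`(1/n) ∑_{ℓ<n} φ(Y ℓ) → E[φ(Y 0)]` almost surely. -/
theorem stmt10 {Ω : Type*} [MeasurableSpace Ω] (P : Measure Ω) [IsProbabilityMeasure P]
    (Y : ℕ → Ω → ℝ) (hYmeas : ∀ t, Measurable (Y t))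
    (hY01 : ∀ t ω, Y t ω ∈ Set.Icc (0 : ℝ) 1)
    (hstat : StrictlyStationary P Y)
    (φ : ℝ → ℝ) (hφ : Measurable φ) (hL2 : MemLp (fun ω => φ (Y 0 ω)) 2 P)
    (q : ℝ) (hq : q ∈ Set.Ico (0 : ℝ) 1)
    (hcov : Summable fun k : ℕ =>
      |cov P (fun ω => φ (Y 0 ω)) (fun ω => φ (Y (k + 1) ω))| / ((k : ℝ) + 1) ^ q) :
    ∀ᵐ ω ∂P, Filter.Tendsto
      (fun n : ℕ => (1 / (n : ℝ)) * ∑ ℓ ∈ Finset.range n, φ (Y ℓ ω))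
      Filter.atTop (nhds (∫ ω', φ (Y 0 ω') ∂P)) :=
  stmt10_general P Y hYmeas hstat φ hφ hL2 q hq hcov
end
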